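/- arXiv:1112.4152 — 3 statements merged into one kernel-verified Lean document; each statement's English description precedes it below -/
import Mathlib

section
/- There exists a family of continuum-many pairwise disjoint Bernstein subsets of ℝ. -/
/-- A set `S ⊆ ℝ` is Bernstein if every perfect set (nonempty, closed, no
isolated points) meets both `S` and its complement. -/
def IsBernstein (S : Set ℝ) : Prop :=
  ∀ P : Set ℝ, Perfect P → P.Nonempty → (S ∩ P).Nonempty ∧ (P \ S).Nonempty

/-!
Enumerate the pairs `(P, r)` of a nonempty perfect set and a real label in order type `𝔠`.
There are only `𝔠` of them, while every nonempty perfect set has `𝔠` points, so by transfinite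
recursion we can pick pairwise distinct points `x (P, r) ∈ P`. The set `S r` of points carrying
label `r` meets every `P` (at `x (P, r)`) and misses a point of every `P` (namely `x (P, r + 1)`).
-/

open Cardinal Set Function

universe u

theorem exists_injective_forall_mem_of_mk_Iio_lt {α β : Type u} [LinearOrder α]
    [WellFoundedLT α] (A : α → Set β) (hA : ∀ a, #(Iio a) < #(A a)) :
    ∃ f : α → β, Injective f ∧ ∀ a, f a ∈ A a := by
  have fresh : ∀ a (g : Iio a → β), ∃ y ∈ A a, y ∉ range g := fun a g => by
    by_contra! h
    exact (mk_range_le.trans_lt (hA a)).not_ge (mk_le_mk_of_subset h)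
  choose pick pick_mem pick_fresh using fresh
  let f : α → β := WellFoundedLT.fix fun a g => pick a fun b => g b b.2
  have hf (a : α) : f a = pick a fun b => f b := WellFoundedLT.fix_eq _ a
  refine ⟨f, Injective.of_lt_imp_ne fun a b hab heq => ?_, fun a => hf a ▸ pick_mem _ _⟩
  have : f b ∈ range fun c : Iio b => f c := ⟨⟨a, hab⟩, heq⟩
  exact pick_fresh b _ (hf b ▸ this)

theorem exists_injective_forall_mem_of_mk_le {ι β : Type u} (A : ι → Set β)
    (hA : ∀ i, #ι ≤ #(A i)) : ∃ f : ι → β, Injective f ∧ ∀ i, f i ∈ A i := by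
  obtain ⟨_, _, hι⟩ := exists_ord_eq_type_lt ι
  exact exists_injective_forall_mem_of_mk_Iio_lt A fun i => (mk_Iio_lt i hι).trans_le (hA i)

theorem Perfect.continuum_le_mk {α : Type u} [MetricSpace α] [CompleteSpace α] {C : Set α}
    (hC : Perfect C) (hne : C.Nonempty) : 𝔠 ≤ #C := by
  obtain ⟨f, hfC, -, hf⟩ := hC.exists_nat_bool_injection hne
  simpa using lift_mk_le_lift_mk_of_injective (f := fun x => (⟨f x, hfC ⟨x, rfl⟩⟩ : C))
    fun a b hab => hf (congrArg Subtype.val hab)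

theorem mk_setOf_isClosed_le_continuum (α : Type u) [TopologicalSpace α]
    [SecondCountableTopology α] : #{s : Set α | IsClosed s} ≤ 𝔠 := by
  obtain ⟨B, hBc, -, hB⟩ := TopologicalSpace.exists_countable_basis α
  have : Countable B := hBc.to_subtype
  -- A closed set is recovered from the basic open sets contained in its complement.
  let code : {s : Set α | IsClosed s} → 𝒫 B :=
    fun s => ⟨{b ∈ B | b ⊆ (s : Set α)ᶜ}, fun _ hb => hb.1⟩
  have hcode : Injective code := fun s t hst => Subtype.ext <| compl_inj_iff.mp <| by
    rw [hB.open_eq_sUnion' s.2.isOpen_compl, hB.open_eq_sUnion' t.2.isOpen_compl]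
    exact congrArg sUnion (congrArg Subtype.val hst)
  calc #{s : Set α | IsClosed s} ≤ #(𝒫 B) := mk_le_of_injective hcode
    _ = 2 ^ #B := mk_powerset B
    _ ≤ 2 ^ ℵ₀ := power_le_power_left two_ne_zero mk_le_aleph0
    _ = 𝔠 := two_power_aleph0

/-- There exist continuum-many pairwise disjoint Bernstein subsets of `ℝ`
(indexed injectively by `ℝ`, which has cardinality the continuum). -/
theorem exists_continuum_many_disjoint_bernstein_sets :
    ∃ S : ℝ → Set ℝ, Function.Injective S ∧
      (Pairwise fun i j => Disjoint (S i) (S j)) ∧ ∀ r : ℝ, IsBernstein (S r) := by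
  let Perfects := {P : Set ℝ | Perfect P ∧ P.Nonempty}
  have : Nonempty Perfects := ⟨⟨univ, PerfectSpace.univ_perfect ℝ, univ_nonempty⟩⟩
  have hPerfects : #Perfects ≤ 𝔠 :=
    (mk_le_mk_of_subset fun P hP => hP.1.closed).trans (mk_setOf_isClosed_le_continuum ℝ)
  have hι : #(Perfects × ℝ) ≤ 𝔠 := by
    simpa [mk_real] using mul_le_mul' hPerfects (le_refl 𝔠)
  obtain ⟨x, hx, hxP⟩ :=
    exists_injective_forall_mem_of_mk_le (fun i : Perfects × ℝ => (i.1 : Set ℝ)) fun i =>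
      hι.trans (i.1.2.1.continuum_le_mk i.1.2.2)
  refine ⟨fun r => x '' (Prod.snd ⁻¹' {r}), ?_, ?_, fun r P hP hne => ⟨?_, ?_⟩⟩
  · exact (image_injective.mpr hx).comp
      ((preimage_injective.mpr Prod.snd_surjective).comp singleton_injective)
  · exact fun r s hrs => (disjoint_image_iff hx).mpr ((disjoint_singleton.mpr hrs).preimage _)
  · exact ⟨x (⟨P, hP, hne⟩, r), mem_image_of_mem x rfl, hxP (⟨P, hP, hne⟩, r)⟩
  · refine ⟨x (⟨P, hP, hne⟩, r + 1), hxP (⟨P, hP, hne⟩, r + 1), fun h => ?_⟩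
    exact (lt_add_one r).ne' (hx.mem_set_image.mp h)
end

section
/- If (X_m)_{m∈ℕ} is a countable family of subsets of ℝ whose union is a Bernstein set, then the union of their closures is co-countable in ℝ. -/
open Filter Topology Set

instance Pi.perfectSpace {ι : Type*} {X : ι → Type*} [∀ i, TopologicalSpace (X i)] [Infinite ι]
    [∀ i, Nontrivial (X i)] : PerfectSpace (∀ i, X i) where
  univ_preperfect := by
    classical
    refine preperfect_iff_nhds.2 fun a _ U hU => ?_
    -- changing `a` in the single coordinate `i` approaches `a` as `i` leaves every finite set
    let b : ι → ∀ i, X i := fun i => Function.update a i (exists_ne (a i)).choose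
    have hb : Tendsto b cofinite (𝓝 a) := tendsto_pi_nhds.2 fun j =>
      tendsto_const_nhds.congr' <| (Set.finite_singleton j).eventually_cofinite_notMem.mono
        fun i hij => (Function.update_of_ne (Ne.symm hij) _ _).symm
    obtain ⟨i, hi⟩ := (hb.eventually_mem hU).exists
    refine ⟨b i, ⟨hi, mem_univ _⟩, fun hba => ?_⟩
    have := congrFun hba i
    simp only [b, Function.update_self] at this
    exact (exists_ne (a i)).choose_spec this

theorem perfect_range_of_continuous_injective {X Y : Type*} [TopologicalSpace X]
    [TopologicalSpace Y] [CompactSpace X] [PerfectSpace X] [T2Space Y] {f : X → Y}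
    (hf : Continuous f) (hinj : Function.Injective f) : Perfect (range f) := by
  refine ⟨(isCompact_range hf).isClosed, preperfect_iff_nhds.2 ?_⟩
  rintro _ ⟨a, rfl⟩ U hU
  obtain ⟨b, ⟨hbU, -⟩, hba⟩ := preperfect_iff_nhds.1 PerfectSpace.univ_preperfect a (mem_univ a)
    _ (hf.continuousAt.preimage_mem_nhds hU)
  exact ⟨f b, ⟨hbU, mem_range_self b⟩, hinj.ne hba⟩

theorem MeasurableSet.exists_nat_bool_injection_of_not_countable {α : Type*}
    [TopologicalSpace α] [PolishSpace α] [MeasurableSpace α] [BorelSpace α] {s : Set α}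
    (hs : MeasurableSet s) (hunc : ¬s.Countable) :
    ∃ f : (ℕ → Bool) → α, range f ⊆ s ∧ Continuous f ∧ Function.Injective f := by
  obtain ⟨t', ht', ht'Polish, hsClosed, -⟩ := hs.isClopenable
  obtain ⟨f, hfs, hf, hinj⟩ :=
    @IsClosed.exists_nat_bool_injection_of_not_countable α t' ht'Polish s hsClosed hunc
  exact ⟨f, hfs, continuous_le_rng ht' hf, hinj⟩

theorem MeasurableSet.exists_perfect_nonempty_subset_of_not_countable {α : Type*}
    [TopologicalSpace α] [PolishSpace α] [MeasurableSpace α] [BorelSpace α] {s : Set α}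
    (hs : MeasurableSet s) (hunc : ¬s.Countable) :
    ∃ P ⊆ s, Perfect P ∧ P.Nonempty := by
  obtain ⟨f, hfs, hf, hinj⟩ := hs.exists_nat_bool_injection_of_not_countable hunc
  exact ⟨range f, hfs, perfect_range_of_continuous_injective hf hinj, range_nonempty f⟩

theorem IsBernstein.countable_of_measurableSet_of_disjoint {S B : Set ℝ} (hS : IsBernstein S)
    (hB : MeasurableSet B) (hSB : Disjoint S B) : B.Countable := by
  by_contra hunc
  obtain ⟨P, hPB, hP, hPne⟩ := hB.exists_perfect_nonempty_subset_of_not_countable hunc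
  obtain ⟨x, hxS, hxP⟩ := (hS P hP hPne).1
  exact hSB.notMem_of_mem_left hxS (hPB hxP)

/-- If the union of a countable family of sets of reals is a Bernstein set,
then the union of their closures is co-countable in `ℝ`. -/
theorem union_closures_cocountable_of_bernstein_union (X : ℕ → Set ℝ)
    (h : IsBernstein (⋃ m, X m)) :
    Set.Countable (⋃ m, closure (X m))ᶜ := by
  refine h.countable_of_measurableSet_of_disjoint
    (MeasurableSet.iUnion fun m => isClosed_closure.measurableSet).compl ?_
  exact disjoint_compl_right_iff_subset.2 (iUnion_mono fun m => subset_closure)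
end

section
/- Let L be a topological space, d a metric on L, and suppose d fragments every nonempty subset Y of L in the following two-case sense: either Y meets a fixed open 'metrizable part' where fragmentation holds, or Y is contained in a scattered closed subset. Then d fragments L. Concretely: if K is a topological space, M ⊆ K is open, the subspace topology on M is induced by the restriction of d, and K \ M is scattered, then d fragments K. -/
/-!
If `F` meets `M` at `x`, a small `d`-ball of `M` around `x` is open in `M`, hence in `K` because
`M` is open, and it cuts out of `F` a nonempty piece of small diameter. Otherwise `F` lies in the
scattered set `K \ M`, so some point of `F` is isolated in `F` and the singleton is the piece.
-/

open Set

section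

variable {K : Type*} [TopologicalSpace K]

/-- `d` fragments `F` at scale `ε`. -/
def HasSmallOpenPiece (d : K → K → ℝ) (ε : ℝ) (F : Set K) : Prop :=
  ∃ U : Set K, IsOpen U ∧ (U ∩ F).Nonempty ∧ ∀ x ∈ U ∩ F, ∀ y ∈ U ∩ F, d x y < ε

variable {d : K → K → ℝ} {ε : ℝ} {F M : Set K}

theorem hasSmallOpenPiece_of_isolated {x : K} {U : Set K} (hε : 0 < ε) (hxx : d x x = 0)
    (hU : IsOpen U) (hUF : U ∩ F = {x}) : HasSmallOpenPiece d ε F := by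
  refine ⟨U, hU, hUF ▸ singleton_nonempty x, ?_⟩
  rw [hUF]
  rintro a rfl b rfl
  rwa [hxx]

theorem exists_isOpen_inter_eq_ball (htri : ∀ x y z, d x z ≤ d x y + d y z)
    (hMtop : ∀ V ⊆ M, (∀ x ∈ V, ∃ ε > (0 : ℝ), ∀ y ∈ M, d x y < ε → y ∈ V) →
      ∃ W : Set K, IsOpen W ∧ V = W ∩ M)
    (x : K) (r : ℝ) : ∃ W : Set K, IsOpen W ∧ {y ∈ M | d x y < r} = W ∩ M := by
  refine hMtop _ (fun _ hy => hy.1) fun z hz => ⟨r - d x z, by linarith [hz.2], ?_⟩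
  intro y hyM hzy
  exact ⟨hyM, by linarith [htri x z y]⟩

theorem hasSmallOpenPiece_of_mem_open_part (hsymm : ∀ x y, d x y = d y x)
    (htri : ∀ x y z, d x z ≤ d x y + d y z) (hMopen : IsOpen M)
    (hMtop : ∀ V ⊆ M, (∀ x ∈ V, ∃ ε > (0 : ℝ), ∀ y ∈ M, d x y < ε → y ∈ V) →
      ∃ W : Set K, IsOpen W ∧ V = W ∩ M)
    (hε : 0 < ε) {x : K} (hxx : d x x = 0) (hxF : x ∈ F) (hxM : x ∈ M) :
    HasSmallOpenPiece d ε F := by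
  obtain ⟨W, hW, hball⟩ := exists_isOpen_inter_eq_ball htri hMtop x (ε / 2)
  have mem_ball {y : K} (hy : y ∈ W ∩ M) : d x y < ε / 2 := (hball.symm ▸ hy).2
  have hxW : x ∈ W ∩ M := hball ▸ ⟨hxM, by rw [hxx]; linarith⟩
  refine ⟨W ∩ M, hW.inter hMopen, ⟨x, hxW, hxF⟩, fun a ha b hb => ?_⟩
  calc d a b ≤ d x a + d x b := hsymm x a ▸ htri a x b
    _ < ε := by linarith [mem_ball ha.1, mem_ball hb.1]

end

theorem fragmented_of_open_metrizable_part_and_scattered_rest_general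
    (K : Type*) [TopologicalSpace K] (d : K → K → ℝ)
    (hd0 : ∀ x y, d x y = 0 ↔ x = y)
    (hsymm : ∀ x y, d x y = d y x)
    (htri : ∀ x y z, d x z ≤ d x y + d y z)
    (M : Set K) (hMopen : IsOpen M)
    (hMtop : ∀ V ⊆ M, (∃ W : Set K, IsOpen W ∧ V = W ∩ M) ↔
      ∀ x ∈ V, ∃ ε > (0 : ℝ), ∀ y ∈ M, d x y < ε → y ∈ V)
    (hscat : ∀ F ⊆ Mᶜ, F.Nonempty → ∃ x ∈ F, ∃ U : Set K, IsOpen U ∧ U ∩ F = {x}) :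
    ∀ ε : ℝ, 0 < ε → ∀ F : Set K, F.Nonempty →
      ∃ U : Set K, IsOpen U ∧ (U ∩ F).Nonempty ∧
        ∀ x ∈ U ∩ F, ∀ y ∈ U ∩ F, d x y < ε := by
  intro ε hε F hF
  rcases (F ∩ M).eq_empty_or_nonempty with hFM | ⟨x, hxF, hxM⟩
  · have hFMc : F ⊆ Mᶜ := fun y hyF hyM => hFM.subset ⟨hyF, hyM⟩
    obtain ⟨x, -, U, hU, hUF⟩ := hscat F hFMc hF
    exact hasSmallOpenPiece_of_isolated hε ((hd0 x x).2 rfl) hU hUF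
  · exact hasSmallOpenPiece_of_mem_open_part hsymm htri hMopen
      (fun V hV => (hMtop V hV).2) hε ((hd0 x x).2 rfl) hxF hxM

/-- Fragmentation of a space split into an open metrizable part and a
scattered remainder: if `K` is a topological space, `d` is a metric on the set
`K`, `M ⊆ K` is open, the subspace topology on `M` is the one induced by the
restriction of `d`, and `K \ M` is scattered, then `d` fragments `K`: for
every `ε > 0` every nonempty `F ⊆ K` has a relatively open nonempty piece of
`d`-diameter less than `ε`. -/
theorem fragmented_of_open_metrizable_part_and_scattered_rest
    (K : Type*) [TopologicalSpace K] (d : K → K → ℝ)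
    (hnonneg : ∀ x y, 0 ≤ d x y)
    (hd0 : ∀ x y, d x y = 0 ↔ x = y)
    (hsymm : ∀ x y, d x y = d y x)
    (htri : ∀ x y z, d x z ≤ d x y + d y z)
    (M : Set K) (hMopen : IsOpen M)
    (hMtop : ∀ V ⊆ M, (∃ W : Set K, IsOpen W ∧ V = W ∩ M) ↔
      ∀ x ∈ V, ∃ ε > (0 : ℝ), ∀ y ∈ M, d x y < ε → y ∈ V)
    (hscat : ∀ F ⊆ Mᶜ, F.Nonempty → ∃ x ∈ F, ∃ U : Set K, IsOpen U ∧ U ∩ F = {x}) :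
    ∀ ε : ℝ, 0 < ε → ∀ F : Set K, F.Nonempty →
      ∃ U : Set K, IsOpen U ∧ (U ∩ F).Nonempty ∧
        ∀ x ∈ U ∩ F, ∀ y ∈ U ∩ F, d x y < ε :=
  fragmented_of_open_metrizable_part_and_scattered_rest_general K d hd0 hsymm htri M hMopen hMtop
    hscat
end
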